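/- Let N be a positive integer and γ ∈ ℂ with |γ| = 1. Let u be a generalised eigenvector associated with z ∈ ℂ with (u_0, u_1) = α ∈ ℂ² ∖ {0}. Then for every n ≥ 1, |S_{n+N}^γ(α, z) − S_n^γ(α, z)| ≤ ‖a_{n+2N−1}·X_{n+N}(z) − a_{n+N−1}·conj(a_{n+N−1}/a_{n−1})·conj(X_n(z))‖ · (|u_{n+N−1}|² + |u_{n+N}|²), where ‖·‖ is the operator norm on 2×2 complex matrices. -/

import Mathlib

open Filter Matrix Topology

noncomputable section

/-- The operator norm of a 2×2 complex matrix (as operator on Euclidean ℂ²). -/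
noncomputable def opNorm (X : Matrix (Fin 2) (Fin 2) ℂ) : ℝ :=
  ‖Matrix.toEuclideanCLM (𝕜 := ℂ) X‖

/-- Entrywise complex conjugation of a matrix. -/
def mconj (X : Matrix (Fin 2) (Fin 2) ℂ) : Matrix (Fin 2) (Fin 2) ℂ :=
  X.map (starRingEnd ℂ)

/-- Hermitian symmetrisation. -/
def symQ (X : Matrix (Fin 2) (Fin 2) ℂ) : Matrix (Fin 2) (Fin 2) ℂ :=
  (2⁻¹ : ℂ) • (X + Xᴴ)

def Ematrix : Matrix (Fin 2) (Fin 2) ℂ := !![0, -1; 1, 0]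

/-- One-step transfer matrix `B_j(z)`. -/
def Bmat (a b : ℕ → ℂ) (j : ℕ) (z : ℂ) : Matrix (Fin 2) (Fin 2) ℂ :=
  !![0, 1; -(a (j-1) / a j), (z - b j) / a j]

/-- `N`-step transfer matrix `X_n(z) = B_{n+N-1}(z) ⋯ B_n(z)`. -/
def transfer (a b : ℕ → ℂ) (N n : ℕ) (z : ℂ) : Matrix (Fin 2) (Fin 2) ℂ :=
  (((List.range N).map fun j => Bmat a b (n + j) z).reverse).prod

/-- Generalised eigenvector associated with `z`. -/
def IsGenEigen (a b : ℕ → ℂ) (z : ℂ) (u : ℕ → ℂ) : Prop :=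
  ¬(u 0 = 0 ∧ u 1 = 0) ∧
    ∀ n, 1 ≤ n → z * u n = a n * u (n+1) + b n * u n + a (n-1) * u (n-1)

/-- The twisted Stolz class `D̃₁(K, GL(2,ℂ))`. -/
def MemD1K (K : Set ℂ) (Y : ℕ → ℂ → Matrix (Fin 2) (Fin 2) ℂ) : Prop :=
  (∀ n, 1 ≤ n → ContinuousOn (Y n) K) ∧
  (∀ n, 1 ≤ n → ∀ z ∈ K, IsUnit (Y n z)) ∧
  (∃ C : ℝ, ∀ n, 1 ≤ n → ∀ z ∈ K, opNorm (Y n z) ≤ C) ∧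
  (∃ g : ℕ → ℝ, Summable g ∧ ∀ n, 1 ≤ n → ∀ z ∈ K,
      opNorm (Y (n+1) z - mconj (Y n z)) ≤ g n)

/-- The twisted Stolz class `D̃₁(ℂ)` for scalar sequences `(x_n : n ≥ 1)`. -/
def MemD1 (x : ℕ → ℂ) : Prop :=
  (∃ C : ℝ, ∀ n, 1 ≤ n → ‖x n‖ ≤ C) ∧
    Summable (fun n : ℕ => ‖x (n+2) - (starRingEnd ℂ) (x (n+1))‖)

def MemD1N (N : ℕ) (x : ℕ → ℂ) : Prop := ∀ i < N, MemD1 (fun n => x (n*N+i))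

/-- The quadratic form `v ↦ ⟨M v, v⟩`. -/
def Qform (M : Matrix (Fin 2) (Fin 2) ℂ) (v : Fin 2 → ℂ) : ℂ :=
  dotProduct (star v) (M.mulVec v)

def Qgam (a b : ℕ → ℂ) (N : ℕ) (γ : ℂ) (n : ℕ) (z : ℂ) (v : Fin 2 → ℂ) : ℂ :=
  Qform (symQ ((a (n+N-1) / (γ * (‖a (n+N-1)‖ : ℂ))) • (Ematrix * transfer a b N n z))) v

def Qtil (a b : ℕ → ℂ) (N : ℕ) (γ : ℂ) (n : ℕ) (z : ℂ) (v : Fin 2 → ℂ) : ℂ :=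
  Qform (symQ ((a (n+N-1) / (γ * (‖a (n+N-1)‖ : ℂ)) *
      (starRingEnd ℂ) (a (n+N-1) / a (n-1))) • (Ematrix * mconj (transfer a b N n z)))) v

/-- The `N`-shifted Turán determinant, expressed via a generalised eigenvector `u`. -/
def Sdet (a b : ℕ → ℂ) (N : ℕ) (γ : ℂ) (z : ℂ) (u : ℕ → ℂ) (n : ℕ) : ℂ :=
  (‖a (n+N-1)‖ : ℂ) * Qgam a b N γ n z ![u (n-1), u n]

/-- Uniform non-degeneracy of a family of quadratic forms. -/
def UnifNonDeg (K : Set ℂ) (Q : ℕ → ℂ → (Fin 2 → ℂ) → ℂ) : Prop :=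
  ∃ c₁ > (0:ℝ), ∃ c₂ > (0:ℝ), ∃ M : ℕ, 1 ≤ M ∧
    ∀ v : Fin 2 → ℂ, ∀ z ∈ K, ∀ n, M ≤ n →
      c₁ * (‖v 0‖^2 + ‖v 1‖^2) ≤ ‖Q n z v‖ ∧ ‖Q n z v‖ ≤ c₂ * (‖v 0‖^2 + ‖v 1‖^2)

def RealEntries (X : Matrix (Fin 2) (Fin 2) ℂ) : Prop := ∀ p q, (X p q).im = 0

def discr (X : Matrix (Fin 2) (Fin 2) ℂ) : ℂ := (Matrix.trace X)^2 - 4 * X.det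

/-- Periodic one-step matrix `𝔅_j(x)` (real). -/
def pB (α β : ℤ → ℝ) (j : ℤ) (x : ℝ) : Matrix (Fin 2) (Fin 2) ℝ :=
  !![0, 1; -(α (j-1) / α j), (x - β j) / α j]

/-- Periodic transfer matrix `𝔛_i(x) = 𝔅_{i+N-1}(x) ⋯ 𝔅_i(x)`. -/
def pX (α β : ℤ → ℝ) (N : ℕ) (i : ℤ) (x : ℝ) : Matrix (Fin 2) (Fin 2) ℝ :=
  (((List.range N).map fun j => pB α β (i + j) x).reverse).prod

/-- The generalised eigenvector with initial data `α`. -/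
def gev (a b : ℕ → ℂ) (z : ℂ) (α : Fin 2 → ℂ) : ℕ → ℂ
  | 0 => α 0
  | 1 => α 1
  | n+2 => ((z - b (n+1)) * gev a b z α (n+1) - a n * gev a b z α n) / a (n+1)

end

/-!
`X_n` carries `(u_{n-1}, u_n)` to `(u_{n+N-1}, u_{n+N})`, and every 2×2 matrix satisfies
`Xᴴ E conj(X) = conj(det X) E` with `det X_n = a_{n-1} / a_{n+N-1}`. Hence `S_n` is the real part
of `γ⁻¹ a_{n+N-1} conj(a_{n+N-1} / a_{n-1}) ⟨E conj(X_n) w, w⟩` with `w = (u_{n+N-1}, u_{n+N})`,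
which is the same vector on which `S_{n+N}` is evaluated. So `S_{n+N} - S_n` is the real part of
`γ⁻¹ ⟨E D w, w⟩` for the matrix `D` of the bound, and `E` is unitary.
-/

open ComplexConjugate
open scoped Matrix.Norms.L2Operator

section QuadraticForm

variable (M M' X : Matrix (Fin 2) (Fin 2) ℂ) (v : Fin 2 → ℂ)

lemma Qform_smul (c : ℂ) : Qform (c • M) v = c * Qform M v := by
  simp only [Qform, smul_mulVec, dotProduct_smul, smul_eq_mul]

lemma Qform_add : Qform (M + M') v = Qform M v + Qform M' v := by
  simp only [Qform, add_mulVec, dotProduct_add]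

lemma Qform_sub : Qform (M - M') v = Qform M v - Qform M' v := by
  simp only [Qform, sub_mulVec, dotProduct_sub]

lemma Qform_conjTranspose : Qform Mᴴ v = conj (Qform M v) := by
  rw [Qform, Qform, mulVec_conjTranspose, star_dotProduct_star, ← dotProduct_mulVec]
  rfl

lemma Qform_symQ : Qform (symQ M) v = (Qform M v).re := by
  rw [symQ, Qform_smul, Qform_add, Qform_conjTranspose, Complex.re_eq_add_conj]
  ring

lemma Qform_mulVec : Qform M (X *ᵥ v) = Qform (Xᴴ * M * X) v := by
  rw [Qform, Qform, star_mulVec, ← dotProduct_mulVec, mulVec_mulVec, mulVec_mulVec,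
    Matrix.mul_assoc]

lemma norm_Qform_le : ‖Qform M v‖ ≤ opNorm M * (‖v 0‖ ^ 2 + ‖v 1‖ ^ 2) := by
  set x : EuclideanSpace ℂ (Fin 2) := WithLp.toLp 2 v
  have hQ : Qform M v = inner ℂ x (toEuclideanCLM (𝕜 := ℂ) M x) := by
    rw [Qform, dotProduct_comm]; rfl
  have hx : ‖x‖ ^ 2 = ‖v 0‖ ^ 2 + ‖v 1‖ ^ 2 := by
    rw [EuclideanSpace.norm_sq_eq, Fin.sum_univ_two]
  calc ‖Qform M v‖ ≤ ‖x‖ * ‖toEuclideanCLM (𝕜 := ℂ) M x‖ :=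
        hQ ▸ norm_inner_le_norm _ _
    _ ≤ ‖x‖ * (opNorm M * ‖x‖) := by gcongr; exact ContinuousLinearMap.le_opNorm _ x
    _ = opNorm M * (‖v 0‖ ^ 2 + ‖v 1‖ ^ 2) := by rw [← hx]; ring

end QuadraticForm

section Symplectic

lemma Ematrix_mem_unitaryGroup : Ematrix ∈ unitaryGroup (Fin 2) ℂ := by
  rw [mem_unitaryGroup_iff, star_eq_conjTranspose]
  ext i j
  fin_cases i <;> fin_cases j <;> simp [Ematrix, Matrix.mul_apply, Fin.sum_univ_two]

lemma opNorm_Ematrix_mul (D : Matrix (Fin 2) (Fin 2) ℂ) : opNorm (Ematrix * D) = opNorm D :=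
  CStarRing.norm_mem_unitary_mul D Ematrix_mem_unitaryGroup

lemma transpose_mul_Ematrix_mul (X : Matrix (Fin 2) (Fin 2) ℂ) :
    Xᵀ * Ematrix * X = X.det • Ematrix := by
  ext i j
  fin_cases i <;> fin_cases j <;>
    simp [Ematrix, Matrix.mul_apply, Fin.sum_univ_two, det_fin_two] <;> ring

lemma conjTranspose_mul_Ematrix_mul_mconj (X : Matrix (Fin 2) (Fin 2) ℂ) :
    Xᴴ * Ematrix * mconj X = conj X.det • Ematrix := by
  have : Xᴴ = (mconj X)ᵀ := rfl
  rw [this, transpose_mul_Ematrix_mul, mconj, RingHom.map_det]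
  rfl

lemma Qform_Ematrix_mconj_mulVec (X : Matrix (Fin 2) (Fin 2) ℂ) (v : Fin 2 → ℂ) :
    Qform (Ematrix * mconj X) (X *ᵥ v) = conj X.det * Qform (Ematrix * X) v := by
  rw [Qform_mulVec, ← Matrix.mul_assoc, conjTranspose_mul_Ematrix_mul_mconj, smul_mul_assoc,
    Qform_smul]

end Symplectic

section Transfer

variable (a b : ℕ → ℂ) (z : ℂ)

lemma transfer_zero (n : ℕ) : transfer a b 0 n z = 1 := by
  simp [transfer]

lemma transfer_succ (N n : ℕ) :
    transfer a b (N + 1) n z = Bmat a b (n + N) z * transfer a b N n z := by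
  simp [transfer, List.range_succ]

lemma det_Bmat (j : ℕ) : (Bmat a b j z).det = a (j - 1) / a j := by
  simp [Bmat, det_fin_two_of]

lemma det_transfer (ha : ∀ n, a n ≠ 0) (N m : ℕ) :
    (transfer a b N (m + 1) z).det = a m / a (m + N) := by
  induction N with
  | zero => simp [transfer_zero, ha m]
  | succ N ih =>
    rw [transfer_succ, det_mul, ih, det_Bmat, show m + 1 + N - 1 = m + N by omega,
      show m + 1 + N = m + (N + 1) by omega]
    field_simp [ha (m + N)]

lemma Bmat_mulVec {u : ℕ → ℂ} {m : ℕ} (ha : a (m + 1) ≠ 0)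
    (hu : z * u (m + 1) = a (m + 1) * u (m + 2) + b (m + 1) * u (m + 1) + a m * u m) :
    Bmat a b (m + 1) z *ᵥ ![u m, u (m + 1)] = ![u (m + 1), u (m + 2)] := by
  ext i
  fin_cases i
  · simp [Bmat]
  · simp only [Bmat, mulVec, dotProduct, Fin.sum_univ_two, Fin.mk_one, of_apply, cons_val_zero,
      cons_val_one, Nat.add_sub_cancel]
    field_simp
    linear_combination hu

lemma transfer_mulVec {u : ℕ → ℂ} (ha : ∀ n, a n ≠ 0)
    (hu : ∀ n, 1 ≤ n → z * u n = a n * u (n + 1) + b n * u n + a (n - 1) * u (n - 1))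
    (N m : ℕ) :
    transfer a b N (m + 1) z *ᵥ ![u m, u (m + 1)] = ![u (m + N), u (m + N + 1)] := by
  induction N with
  | zero => simp [transfer_zero]
  | succ N ih =>
    rw [transfer_succ, ← mulVec_mulVec, ih, show m + 1 + N = m + N + 1 by omega,
      Bmat_mulVec a b z (ha _) (hu (m + N + 1) (by omega))]
    rfl

end Transfer

section Turan

variable (a b : ℕ → ℂ) (N : ℕ) (γ z : ℂ) (u : ℕ → ℂ)

lemma Sdet_eq_re (n : ℕ) :
    Sdet a b N γ z u n =
      ((γ⁻¹ * (a (n + N - 1) * Qform (Ematrix * transfer a b N n z) ![u (n - 1), u n])).re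
        : ℂ) := by
  rw [Sdet, Qgam, Qform_symQ, Qform_smul, ← Complex.ofReal_mul, ← Complex.re_ofReal_mul,
    ← mul_assoc, ← mul_assoc]
  congr 3
  by_cases h : a (n + N - 1) = 0
  · simp [h]
  · field_simp [h]

lemma Qform_Ematrix_transfer_eq_mconj (ha : ∀ n, a n ≠ 0)
    (hu : ∀ n, 1 ≤ n → z * u n = a n * u (n + 1) + b n * u n + a (n - 1) * u (n - 1))
    (m : ℕ) :
    a (m + N) * Qform (Ematrix * transfer a b N (m + 1) z) ![u m, u (m + 1)] =
      a (m + N) * conj (a (m + N) / a m) *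
        Qform (Ematrix * mconj (transfer a b N (m + 1) z)) ![u (m + N), u (m + N + 1)] := by
  rw [← transfer_mulVec a b z ha hu, Qform_Ematrix_mconj_mulVec, det_transfer a b z ha,
    mul_assoc, ← mul_assoc (conj _), ← map_mul, div_mul_div_cancel₀ (ha _), div_self (ha _),
    map_one, one_mul]

lemma Sdet_add_sub_eq (ha : ∀ n, a n ≠ 0)
    (hu : ∀ n, 1 ≤ n → z * u n = a n * u (n + 1) + b n * u n + a (n - 1) * u (n - 1))
    (m : ℕ) :
    Sdet a b N γ z u (m + N + 1) - Sdet a b N γ z u (m + 1) =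
      ((γ⁻¹ * Qform (Ematrix * (a (m + 2 * N) • transfer a b N (m + N + 1) z -
          (a (m + N) * conj (a (m + N) / a m)) • mconj (transfer a b N (m + 1) z)))
        ![u (m + N), u (m + N + 1)]).re : ℂ) := by
  rw [Sdet_eq_re, Sdet_eq_re, Nat.add_sub_cancel, Nat.add_sub_cancel,
    show m + N + 1 + N - 1 = m + 2 * N by omega, show m + 1 + N - 1 = m + N by omega,
    Qform_Ematrix_transfer_eq_mconj a b N z u ha hu, mul_sub, mul_smul_comm, mul_smul_comm,
    Qform_sub, Qform_smul, Qform_smul, mul_sub, ← Complex.ofReal_sub, Complex.sub_re]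

end Turan

open Filter Matrix Topology in
theorem statement7_general
    (a b : ℕ → ℂ) (ha : ∀ n, a n ≠ 0)
    (N : ℕ) (γ : ℂ) (hγ : ‖γ‖ = 1)
    (z : ℂ) (u : ℕ → ℂ) (hu : IsGenEigen a b z u)
    (n : ℕ) (hn : 1 ≤ n) :
    ‖Sdet a b N γ z u (n+N) - Sdet a b N γ z u n‖ ≤
      opNorm (a (n+2*N-1) • transfer a b N (n+N) z -
          (a (n+N-1) * (starRingEnd ℂ) (a (n+N-1) / a (n-1))) •
            mconj (transfer a b N n z)) *
        (‖u (n+N-1)‖^2 + ‖u (n+N)‖^2) := by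
  obtain ⟨m, rfl⟩ := Nat.exists_eq_add_of_le' hn
  rw [show m + 1 + N = m + N + 1 by omega, show m + 1 + 2 * N - 1 = m + 2 * N by omega,
    Nat.add_sub_cancel, Nat.add_sub_cancel, Sdet_add_sub_eq a b N γ z u ha hu.2,
    Complex.norm_real, Real.norm_eq_abs, ← opNorm_Ematrix_mul]
  set x := Qform _ ![u (m + N), u (m + N + 1)]
  calc |(γ⁻¹ * x).re| ≤ ‖γ⁻¹ * x‖ := Complex.abs_re_le_norm _
    _ = ‖x‖ := by rw [norm_mul, norm_inv, hγ, inv_one, one_mul]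
    _ ≤ _ := norm_Qform_le _ _

open Filter Matrix Topology in
/-- Lemma 1: the increment bound for shifted Turán determinants. -/
theorem statement7
    (a b : ℕ → ℂ) (ha : ∀ n, a n ≠ 0)
    (N : ℕ) (hN : 1 ≤ N) (γ : ℂ) (hγ : ‖γ‖ = 1)
    (z : ℂ) (u : ℕ → ℂ) (hu : IsGenEigen a b z u)
    (n : ℕ) (hn : 1 ≤ n) :
    ‖Sdet a b N γ z u (n+N) - Sdet a b N γ z u n‖ ≤
      opNorm (a (n+2*N-1) • transfer a b N (n+N) z -
          (a (n+N-1) * (starRingEnd ℂ) (a (n+N-1) / a (n-1))) •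
            mconj (transfer a b N n z)) *
        (‖u (n+N-1)‖^2 + ‖u (n+N)‖^2) :=
  statement7_general a b ha N γ hγ z u hu n hn
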